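/- arXiv:2101.07180 — 4 statements merged into one kernel-verified Lean document; each statement's English description precedes it below -/
import Mathlib

section
/- Let δ ∈ (0,1) and let (a_k)_{k≥1} be nonnegative reals with Σ_{k≥1} a_k < ∞. Set V := Σ_{k≥1} a_k and suppose a_k ≤ k·δ·V for every k ≥ 1. Then V ≤ 3·√δ·Σ_{k≥1} k·a_k. -/
/-!
Put `s = √δ` and `m = ⌊1/s⌋`. The first `m` weights have total at most
`δ V (1 + ⋯ + m) = δ V m (m+1)/2 ≤ (1+s)/2 · V`, while every later weight carries a factor
`k ≥ m + 1 ≥ 1/s` in `∑ k a_k`, so the tail is at most `s ∑ k a_k`. Absorbing `(1+s)/2 · V` into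
the left-hand side gives `V ≤ 2s/(1-s) ∑ k a_k`, and `2/(1-s) ≤ 3` once `s ≤ 1/3`; for larger `s`
the bound `V ≤ ∑ k a_k` already suffices.
-/

open ENNReal Finset

namespace ENNReal

theorem tsum_le_tsum_natCast_add_one_mul (f : ℕ → ℝ≥0∞) :
    ∑' k, f k ≤ ∑' k : ℕ, ((k : ℝ≥0∞) + 1) * f k :=
  ENNReal.tsum_le_tsum fun _ => le_mul_of_one_le_left' le_add_self

theorem natCast_add_one_mul_tsum_nat_add_le (f : ℕ → ℝ≥0∞) (m : ℕ) :
    ((m : ℝ≥0∞) + 1) * ∑' k, f (k + m) ≤ ∑' k : ℕ, ((k : ℝ≥0∞) + 1) * f k := by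
  rw [← ENNReal.tsum_mul_left]
  calc ∑' k, ((m : ℝ≥0∞) + 1) * f (k + m)
      ≤ ∑' k, (((k + m : ℕ) : ℝ≥0∞) + 1) * f (k + m) :=
        ENNReal.tsum_le_tsum fun k => by gcongr; exact le_add_self
    _ ≤ ∑' k : ℕ, ((k : ℝ≥0∞) + 1) * f k :=
        tsum_comp_le_tsum_of_injective (add_left_injective m) _

theorem sum_range_natCast_add_one (m : ℕ) :
    ∑ k ∈ range m, ((k : ℝ≥0∞) + 1) = ENNReal.ofReal (m * (m + 1) / 2) := by
  induction m with
  | zero => simp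
  | succ m ih =>
    rw [sum_range_succ, ih, ← ENNReal.ofReal_natCast, ← ENNReal.ofReal_one,
      ← ENNReal.ofReal_add (by positivity) zero_le_one,
      ← ENNReal.ofReal_add (by positivity) (by positivity)]
    congr 1
    push_cast
    ring

theorem one_sub_mul_le_of_le_mul_add {x c y : ℝ≥0∞} (hx : x ≠ ⊤) (h : x ≤ c * x + y) :
    (1 - c) * x ≤ y := by
  rw [ENNReal.sub_mul fun _ _ => hx, one_mul]
  exact tsub_le_iff_right.2 (by rwa [add_comm])

theorem sum_range_le_ofReal_mul_of_le_natCast_add_one_mul {f : ℕ → ℝ≥0∞} {b : ℝ≥0∞}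
    (hf : ∀ k, f k ≤ ((k : ℝ≥0∞) + 1) * b) (m : ℕ) :
    ∑ k ∈ range m, f k ≤ ENNReal.ofReal (m * (m + 1) / 2) * b := by
  rw [← sum_range_natCast_add_one, sum_mul]
  exact sum_le_sum fun k _ => hf k

theorem tsum_nat_add_le_ofReal_mul_tsum_natCast_add_one_mul (f : ℕ → ℝ≥0∞) {m : ℕ} {s : ℝ}
    (hm : 1 ≤ (m + 1) * s) :
    ∑' k, f (k + m) ≤ ENNReal.ofReal s * ∑' k : ℕ, ((k : ℝ≥0∞) + 1) * f k := by
  have hs : 0 ≤ s := (pos_of_mul_pos_right (one_pos.trans_le hm) (by positivity)).le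
  calc ∑' k, f (k + m)
      ≤ ENNReal.ofReal ((m + 1) * s) * ∑' k, f (k + m) :=
        le_mul_of_one_le_left' (by simpa using hm)
    _ = ENNReal.ofReal s * (((m : ℝ≥0∞) + 1) * ∑' k, f (k + m)) := by
        rw [ENNReal.ofReal_mul (by positivity), mul_comm (ENNReal.ofReal _), mul_assoc]
        norm_cast
    _ ≤ ENNReal.ofReal s * ∑' k : ℕ, ((k : ℝ≥0∞) + 1) * f k := by
        gcongr
        exact natCast_add_one_mul_tsum_nat_add_le f m

end ENNReal

theorem tsum_le_ofReal_mul_tsum_natCast_add_one_mul (f : ℕ → ℝ≥0∞) {s : ℝ} (hs : 0 < s)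
    (hs3 : s ≤ 1 / 3) (hf : ∀ k, f k ≤ ((k : ℝ≥0∞) + 1) * ENNReal.ofReal (s ^ 2) * ∑' k, f k) :
    ∑' k, f k ≤ ENNReal.ofReal (3 * s) * ∑' k : ℕ, ((k : ℝ≥0∞) + 1) * f k := by
  set V := ∑' k, f k
  set S := ∑' k : ℕ, ((k : ℝ≥0∞) + 1) * f k
  by_cases hS : S = ⊤
  · rw [hS, ENNReal.mul_top (by simpa using hs)]
    exact le_top
  have hV : V ≠ ⊤ := ne_top_of_le_ne_top hS (tsum_le_tsum_natCast_add_one_mul f)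
  set m := ⌊1 / s⌋₊
  have hm : m * s ≤ 1 := (le_div_iff₀ hs).1 (Nat.floor_le (by positivity))
  have hm1 : 1 ≤ (m + 1) * s := (div_le_iff₀ hs).1 (Nat.lt_floor_add_one _).le
  have head : ∑ k ∈ range m, f k ≤ ENNReal.ofReal ((1 + s) / 2) * V := by
    refine (sum_range_le_ofReal_mul_of_le_natCast_add_one_mul
      (fun k => (hf k).trans_eq (mul_assoc _ _ _)) m).trans ?_
    rw [← mul_assoc, ← ENNReal.ofReal_mul (by positivity)]
    gcongr
    nlinarith
  have absorbed : ENNReal.ofReal ((1 - s) / 2) * V ≤ ENNReal.ofReal s * S := by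
    have h := one_sub_mul_le_of_le_mul_add hV <| calc
      V = ∑ k ∈ range m, f k + ∑' k, f (k + m) := (ENNReal.summable.sum_add_tsum_nat_add').symm
      _ ≤ ENNReal.ofReal ((1 + s) / 2) * V + ENNReal.ofReal s * S :=
        add_le_add head (tsum_nat_add_le_ofReal_mul_tsum_natCast_add_one_mul f hm1)
    rwa [← ENNReal.ofReal_one, ← ENNReal.ofReal_sub _ (by positivity),
      show (1 : ℝ) - (1 + s) / 2 = (1 - s) / 2 by ring] at h
  refine (ENNReal.mul_le_mul_iff_right (by simpa using hs3.trans_lt (by norm_num))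
    ENNReal.ofReal_ne_top).1 (absorbed.trans ?_)
  rw [← mul_assoc, ← ENNReal.ofReal_mul (by linarith)]
  gcongr
  nlinarith

theorem stmt_2_general (δ : ℝ) (hδ : δ ∈ Set.Ioo (0 : ℝ) 1) (a : ℕ → ℝ≥0∞)
    (V : ℝ≥0∞) (hV : V = ∑' k, a (k + 1))
    (hbd : ∀ k : ℕ, 1 ≤ k → a k ≤ (k : ℝ≥0∞) * ENNReal.ofReal δ * V) :
    V ≤ ENNReal.ofReal (3 * Real.sqrt δ) * ∑' (k : ℕ), ((k : ℝ≥0∞) + 1) * a (k + 1) := by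
  subst hV
  rcases lt_or_ge (1 / 3) (Real.sqrt δ) with hlarge | hsmall
  · refine (tsum_le_tsum_natCast_add_one_mul _).trans (le_mul_of_one_le_left' ?_)
    exact ENNReal.one_le_ofReal.2 (by linarith)
  · refine tsum_le_ofReal_mul_tsum_natCast_add_one_mul _ (Real.sqrt_pos.2 hδ.1) hsmall
      fun k => ?_
    rw [Real.sq_sqrt hδ.1.le]
    exact_mod_cast hbd (k + 1) (Nat.le_add_left 1 k)

/-- Combinatorial core of the L²-OSSS inequality with square-root revealment:
if nonnegative summable weights `a k` (for `k ≥ 1`) with total mass `V` satisfy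
`a k ≤ k·δ·V`, then `V ≤ 3·√δ·∑ k·a k`. -/
theorem stmt_2 (δ : ℝ) (hδ : δ ∈ Set.Ioo (0 : ℝ) 1) (a : ℕ → ℝ≥0∞)
    (hfin : (∑' k, a (k + 1)) ≠ ⊤)
    (V : ℝ≥0∞) (hV : V = ∑' k, a (k + 1))
    (hbd : ∀ k : ℕ, 1 ≤ k → a k ≤ (k : ℝ≥0∞) * ENNReal.ofReal δ * V) :
    V ≤ ENNReal.ofReal (3 * Real.sqrt δ) * ∑' (k : ℕ), ((k : ℝ≥0∞) + 1) * a (k + 1) :=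
  stmt_2_general δ hδ a V hV hbd
end

section
/- Let (a_{n,k})_{n≥1,k≥1} be nonnegative reals with Σ_{k≥1} a_{n,k} ≤ 1 for every n. Then the following are equivalent: (i) lim_{t→0+} limsup_{n→∞} Σ_{k≥1} (1 − e^{-kt}) a_{n,k} = 0; (ii) for every ε > 0 there exists m ≥ 1 such that for all n, Σ_{k≥m} a_{n,k} < ε. -/
open Filter Real

private lemma coeff_nonneg {t : ℝ} (ht : 0 ≤ t) (k : ℕ) :
    0 ≤ 1 - Real.exp (-((k : ℝ) + 1) * t) := by
  have h : Real.exp (-((k : ℝ) + 1) * t) ≤ 1 := by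
    rw [Real.exp_le_one_iff]
    have : (0:ℝ) ≤ (k : ℝ) + 1 := by positivity
    nlinarith
  linarith

private lemma coeff_le_one (t : ℝ) (k : ℕ) :
    1 - Real.exp (-((k : ℝ) + 1) * t) ≤ 1 := by
  have := Real.exp_pos (-((k : ℝ) + 1) * t)
  linarith

private lemma summS {a : ℕ → ℕ → ℝ} (ha : ∀ n k, 0 ≤ a n k)
    (hsum : ∀ n, Summable (fun k => a n (k + 1))) (n : ℕ) {t : ℝ} (ht : 0 ≤ t) :
    Summable (fun k : ℕ => (1 - Real.exp (-((k : ℝ) + 1) * t)) * a n (k + 1)) := by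
  refine Summable.of_nonneg_of_le (fun k => mul_nonneg (coeff_nonneg ht k) (ha n (k+1)))
    (fun k => mul_le_of_le_one_left (ha n (k+1)) (coeff_le_one t k)) (hsum n)

private lemma S_le_one {a : ℕ → ℕ → ℝ} (ha : ∀ n k, 0 ≤ a n k)
    (hsum : ∀ n, Summable (fun k => a n (k + 1)))
    (hbd : ∀ n, (∑' k, a n (k + 1)) ≤ 1) (n : ℕ) {t : ℝ} (ht : 0 ≤ t) :
    (∑' (k : ℕ), (1 - Real.exp (-((k : ℝ) + 1) * t)) * a n (k + 1)) ≤ 1 := by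
  refine le_trans (Summable.tsum_le_tsum (fun k => mul_le_of_le_one_left (ha n (k+1)) (coeff_le_one t k))
    (summS ha hsum n ht) (hsum n)) (hbd n)

private lemma S_nonneg {a : ℕ → ℕ → ℝ} (ha : ∀ n k, 0 ≤ a n k) (n : ℕ) {t : ℝ} (ht : 0 ≤ t) :
    0 ≤ (∑' (k : ℕ), (1 - Real.exp (-((k : ℝ) + 1) * t)) * a n (k + 1)) :=
  tsum_nonneg (fun k => mul_nonneg (coeff_nonneg ht k) (ha n (k+1)))

private lemma tail_summable {a : ℕ → ℕ → ℝ}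
    (hsum : ∀ n, Summable (fun k => a n (k + 1))) (n m : ℕ) (hm : 1 ≤ m) :
    Summable (fun k => a n (k + m)) := by
  have h : Summable (a n) := (summable_nat_add_iff 1).mp (hsum n)
  exact (summable_nat_add_iff m).mpr h

/-- Upper bound: `S t n ≤ (1 - exp (-m t)) + tail_m n`. -/
private lemma S_upper {a : ℕ → ℕ → ℝ} (ha : ∀ n k, 0 ≤ a n k)
    (hsum : ∀ n, Summable (fun k => a n (k + 1)))
    (hbd : ∀ n, (∑' k, a n (k + 1)) ≤ 1) (n : ℕ) {t : ℝ} (ht : 0 ≤ t)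
    {m : ℕ} (hm : 1 ≤ m) :
    (∑' (k : ℕ), (1 - Real.exp (-((k : ℝ) + 1) * t)) * a n (k + 1))
      ≤ (1 - Real.exp (-(m : ℝ) * t)) + ∑' k, a n (k + m) := by
  obtain ⟨j, rfl⟩ : ∃ j, m = j + 1 := ⟨m - 1, (Nat.succ_pred_eq_of_pos hm).symm⟩
  set f : ℕ → ℝ := fun k => (1 - Real.exp (-((k : ℝ) + 1) * t)) * a n (k + 1) with hf
  have hfs : Summable f := summS ha hsum n ht
  rw [← Summable.sum_add_tsum_nat_add j hfs]
  have h1 : (∑ i ∈ Finset.range j, f i) ≤ 1 - Real.exp (-((j:ℝ)+1) * t) := by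
    have hstep : ∀ i ∈ Finset.range j, f i ≤ (1 - Real.exp (-((j:ℝ)+1) * t)) * a n (i+1) := by
      intro i hi
      have hij : (i : ℝ) + 1 ≤ (j : ℝ) + 1 := by
        have := Finset.mem_range.mp hi
        have : (i:ℝ) ≤ (j:ℝ) := by exact_mod_cast this.le
        linarith
      have hexp : Real.exp (-((j:ℝ)+1) * t) ≤ Real.exp (-((i:ℝ)+1) * t) := by
        apply Real.exp_le_exp.mpr; nlinarith
      have := ha n (i+1)
      simp only [hf]; nlinarith
    calc (∑ i ∈ Finset.range j, f i)
        ≤ ∑ i ∈ Finset.range j, (1 - Real.exp (-((j:ℝ)+1) * t)) * a n (i+1) :=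
          Finset.sum_le_sum hstep
      _ = (1 - Real.exp (-((j:ℝ)+1) * t)) * ∑ i ∈ Finset.range j, a n (i+1) := by
          rw [Finset.mul_sum]
      _ ≤ (1 - Real.exp (-((j:ℝ)+1) * t)) * 1 := by
          apply mul_le_mul_of_nonneg_left _ (coeff_nonneg ht j)
          exact le_trans (Summable.sum_le_tsum (Finset.range j) (fun i _ => ha n (i+1)) (hsum n)) (hbd n)
      _ = 1 - Real.exp (-((j:ℝ)+1) * t) := mul_one _
  have h2 : (∑' k, f (k + j)) ≤ ∑' k, a n (k + (j+1)) := by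
    have hs1 : Summable fun k => f (k + j) := (summable_nat_add_iff j).mpr hfs
    have hs2 : Summable fun k => a n (k + (j+1)) := tail_summable hsum n (j+1) (Nat.le_add_left _ _)
    refine Summable.tsum_le_tsum (fun k => ?_) hs1 hs2
    have hkey : a n (k + j + 1) = a n (k + (j + 1)) := by ring_nf
    simp only [hf]
    rw [hkey]
    exact mul_le_of_le_one_left (ha n _) (coeff_le_one t _)
  have hcast : ((j + 1 : ℕ) : ℝ) = (j : ℝ) + 1 := by push_cast; ring
  rw [hcast]
  exact add_le_add h1 h2

/-- Lower bound: if `1 ≤ m * t` then `(1 - exp (-1)) * tail_m n ≤ S t n`. -/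
private lemma S_lower {a : ℕ → ℕ → ℝ} (ha : ∀ n k, 0 ≤ a n k)
    (hsum : ∀ n, Summable (fun k => a n (k + 1))) (n : ℕ) {t : ℝ} (ht : 0 ≤ t)
    {m : ℕ} (hm : 1 ≤ m) (hmt : 1 ≤ (m : ℝ) * t) :
    (1 - Real.exp (-1)) * (∑' k, a n (k + m))
      ≤ (∑' (k : ℕ), (1 - Real.exp (-((k : ℝ) + 1) * t)) * a n (k + 1)) := by
  obtain ⟨j, rfl⟩ : ∃ j, m = j + 1 := ⟨m - 1, (Nat.succ_pred_eq_of_pos hm).symm⟩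
  set f : ℕ → ℝ := fun k => (1 - Real.exp (-((k : ℝ) + 1) * t)) * a n (k + 1) with hf
  have hfs : Summable f := summS ha hsum n ht
  rw [← Summable.sum_add_tsum_nat_add j hfs]
  have h0 : 0 ≤ ∑ i ∈ Finset.range j, f i :=
    Finset.sum_nonneg fun i _ => mul_nonneg (coeff_nonneg ht i) (ha n (i+1))
  have h2 : (1 - Real.exp (-1)) * (∑' k, a n (k + (j+1))) ≤ ∑' k, f (k + j) := by
    have hs1 : Summable fun k => f (k + j) := (summable_nat_add_iff j).mpr hfs
    have hs2 : Summable fun k => (1 - Real.exp (-1)) * a n (k + (j+1)) :=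
      (tail_summable hsum n (j+1) (Nat.le_add_left _ _)).mul_left _
    rw [← tsum_mul_left]
    refine Summable.tsum_le_tsum (fun k => ?_) hs2 hs1
    have hkey : a n (k + j + 1) = a n (k + (j + 1)) := by ring_nf
    simp only [hf]
    rw [hkey]
    apply mul_le_mul_of_nonneg_right _ (ha n _)
    have hexp : Real.exp (-((k:ℝ) + (j:ℝ) + 1) * t) ≤ Real.exp (-1) := by
      apply Real.exp_le_exp.mpr
      have h1 : ((j:ℝ) + 1) * t ≤ ((k:ℝ) + (j:ℝ) + 1) * t := by
        have : (0:ℝ) ≤ (k:ℝ) := Nat.cast_nonneg k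
        nlinarith
      have h2 : (1:ℝ) ≤ ((j:ℝ)+1) * t := by
        have : ((j + 1 : ℕ) : ℝ) = (j : ℝ) + 1 := by push_cast; ring
        rwa [this] at hmt
      linarith
    have : ((k + j : ℕ) : ℝ) = (k:ℝ) + (j:ℝ) := by push_cast; ring
    rw [this]
    linarith
  linarith

/-- Chaos-weight criterion for noise stability (Proposition 6.6(a)): the
double limit `lim_{t→0+} limsup_n ∑_k (1 - e^{-kt}) a_{n,k} = 0` holds iff the
weights have uniformly small tails. -/
theorem stmt_4 (a : ℕ → ℕ → ℝ) (ha : ∀ n k, 0 ≤ a n k)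
    (hsum : ∀ n, Summable (fun k => a n (k + 1)))
    (hbd : ∀ n, (∑' k, a n (k + 1)) ≤ 1) :
    Tendsto (fun t : ℝ =>
        Filter.limsup
          (fun n => ∑' (k : ℕ), (1 - Real.exp (-((k : ℝ) + 1) * t)) * a n (k + 1))
          atTop)
      (nhdsWithin 0 (Set.Ioi 0)) (nhds 0)
      ↔ (∀ ε : ℝ, 0 < ε → ∃ m : ℕ, 1 ≤ m ∧
          ∀ n, (∑' (k : ℕ), a n (k + m)) < ε) := by
  set S : ℝ → ℕ → ℝ :=
    fun t n => ∑' (k : ℕ), (1 - Real.exp (-((k : ℝ) + 1) * t)) * a n (k + 1) with hS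
  constructor
  · -- (i) → (ii)
    intro hlim
    by_contra hC
    push_neg at hC
    obtain ⟨ε, hε, hbad⟩ := hC
    set c : ℝ := (1 - Real.exp (-1)) * ε with hc
    have hcpos : 0 < c := by
      have : Real.exp (-1) < 1 := by
        rw [Real.exp_lt_one_iff]; norm_num
      have h1 : 0 < 1 - Real.exp (-1) := by linarith
      exact mul_pos h1 hε
    rw [Metric.tendsto_nhdsWithin_nhds] at hlim
    obtain ⟨δ, hδ, H⟩ := hlim c hcpos
    set t : ℝ := δ / 2 with htdef
    have htpos : 0 < t := by positivity
    have htδ : dist t 0 < δ := by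
      rw [Real.dist_eq, sub_zero, abs_of_pos htpos]; linarith
    have hLlt : |Filter.limsup (S t) atTop| < c := by
      have := H htpos htδ
      rwa [Real.dist_eq, sub_zero] at this
    -- show c ≤ limsup
    have hge : c ≤ Filter.limsup (S t) atTop := by
      apply le_limsup_of_frequently_le
      · rw [Filter.frequently_atTop]
        intro N
        -- choose M large: tails of n' < N small and M * t ≥ 1
        have hev : ∀ᶠ m in atTop, ∀ n' ∈ Finset.range N, (∑' k, a n' (k + m)) < ε := by
          rw [Filter.eventually_all_finset]
          intro n' _
          have hsa : Summable (a n') := (summable_nat_add_iff 1).mp (hsum n')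
          have := tendsto_sum_nat_add (a n')
          exact this.eventually (gt_mem_nhds hε)
        have hev2 : ∀ᶠ m : ℕ in atTop, (1:ℝ) ≤ (m:ℝ) * t := by
          have : Tendsto (fun m : ℕ => (m:ℝ) * t) atTop atTop :=
            (tendsto_natCast_atTop_atTop).atTop_mul_const htpos
          exact this.eventually_ge_atTop 1
        obtain ⟨M, hM⟩ := ((hev.and hev2).and (eventually_ge_atTop 1)).exists
        obtain ⟨⟨hMtail, hMt⟩, hM1⟩ := hM
        obtain ⟨n, hn⟩ := hbad M hM1
        have hnN : N ≤ n := by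
          by_contra hlt
          push_neg at hlt
          exact absurd (hMtail n (Finset.mem_range.mpr hlt)) (not_lt.mpr hn)
        refine ⟨n, hnN, ?_⟩
        calc c = (1 - Real.exp (-1)) * ε := rfl
          _ ≤ (1 - Real.exp (-1)) * (∑' k, a n (k + M)) := by
              apply mul_le_mul_of_nonneg_left hn
              have : Real.exp (-1) < 1 := by rw [Real.exp_lt_one_iff]; norm_num
              linarith
          _ ≤ S t n := S_lower ha hsum n htpos.le hM1 hMt
      · exact ⟨1, Filter.eventually_atTop.mpr ⟨0, fun n _ => S_le_one ha hsum hbd n htpos.le⟩⟩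
    have : c ≤ |Filter.limsup (S t) atTop| := le_trans hge (le_abs_self _)
    linarith
  · -- (ii) → (i)
    intro hii
    rw [Metric.tendsto_nhdsWithin_nhds]
    intro ε hε
    obtain ⟨m, hm1, hm⟩ := hii (ε/2) (half_pos hε)
    have hmpos : (0:ℝ) < m := by exact_mod_cast hm1
    refine ⟨ε / (2 * m), by positivity, ?_⟩
    intro t ht hd
    have htpos : 0 < t := ht
    have htlt : t < ε / (2 * m) := by
      rwa [Real.dist_eq, sub_zero, abs_of_pos htpos] at hd
    rw [Real.dist_eq, sub_zero]
    have hge0 : 0 ≤ Filter.limsup (S t) atTop := by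
      apply le_limsup_of_frequently_le
      · exact Filter.Eventually.frequently (Filter.Eventually.of_forall
          (fun n => S_nonneg ha n htpos.le))
      · exact ⟨1, Filter.eventually_atTop.mpr ⟨0, fun n _ => S_le_one ha hsum hbd n htpos.le⟩⟩
    have hub : Filter.limsup (S t) atTop ≤ (1 - Real.exp (-(m:ℝ) * t)) + ε/2 := by
      apply Filter.limsup_le_of_le
      · exact Filter.isCoboundedUnder_le_of_le atTop (fun n => S_nonneg ha n htpos.le)
      · apply Filter.Eventually.of_forall
        intro n
        have h1 := S_upper ha hsum hbd n htpos.le hm1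
        have h2 := (hm n).le
        calc S t n ≤ (1 - Real.exp (-(m:ℝ) * t)) + ∑' k, a n (k + m) := h1
          _ ≤ (1 - Real.exp (-(m:ℝ) * t)) + ε/2 := by linarith
    have hexp : 1 - Real.exp (-(m:ℝ) * t) ≤ (m:ℝ) * t := by
      have := Real.add_one_le_exp (-(m:ℝ) * t)
      linarith
    have hmt : (m:ℝ) * t < ε/2 := by
      have h1 : (m:ℝ) * t < (m:ℝ) * (ε / (2 * m)) :=
        (mul_lt_mul_iff_right₀ hmpos).mpr htlt
      have h2 : (m:ℝ) * (ε / (2 * m)) = ε / 2 := by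
        field_simp
      linarith
    rw [abs_of_nonneg hge0]
    calc Filter.limsup (S t) atTop ≤ (1 - Real.exp (-(m:ℝ) * t)) + ε/2 := hub
      _ ≤ (m:ℝ) * t + ε/2 := by linarith
      _ < ε/2 + ε/2 := by linarith
      _ = ε := by ring
end

section
/- Let X be a measurable space, let N denote the set of σ-finite measures on X (with restriction μ_A denoting the restriction of μ to the set A), and let Z : N → (measurable subsets of X) satisfy the stopping set property: Z(μ) = Z(μ_{Z(μ)} + ψ_{Z(μ)^c}) for all μ, ψ ∈ N. Then for all μ, ψ ∈ N: μ_{Z(μ)} = ψ if and only if μ_{Z(ψ)} = ψ, and in this case Z(μ) = Z(ψ). -/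
open MeasureTheory

/-- Lemma A.2: for a stopping set `Z` on the space of σ-finite measures,
`μ_{Z(μ)} = ψ` iff `μ_{Z(ψ)} = ψ`, and in this case `Z(μ) = Z(ψ)`. -/
theorem stmt_11 {X : Type*} [MeasurableSpace X]
    (Z : Measure X → Set X) (hZm : ∀ μ : Measure X, MeasurableSet (Z μ))
    (hstop : ∀ μ ψ : Measure X, SigmaFinite μ → SigmaFinite ψ →
      Z μ = Z (μ.restrict (Z μ) + ψ.restrict (Z μ)ᶜ)) :
    ∀ μ ψ : Measure X, SigmaFinite μ → SigmaFinite ψ →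
      (μ.restrict (Z μ) = ψ ↔ μ.restrict (Z ψ) = ψ)
      ∧ (μ.restrict (Z μ) = ψ → Z μ = Z ψ) := by
  intro μ ψ hμ hψ
  -- key: if μ|_{Zμ} = ψ then Z μ = Z ψ (take the zero measure in hstop)
  have key : μ.restrict (Z μ) = ψ → Z μ = Z ψ := by
    intro h
    have h0 := hstop μ 0 hμ inferInstance
    simpa [h, Measure.restrict_zero] using h0
  refine ⟨⟨fun h => ?_, fun h => ?_⟩, key⟩
  · rw [← key h]; exact h
  · -- converse: μ|_{Zψ} = ψ implies Z ψ = Z μ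
    have hrr : ψ.restrict (Z ψ) = μ.restrict (Z ψ) := by
      nth_rewrite 1 [← h]
      rw [Measure.restrict_restrict (hZm ψ), Set.inter_self]
    have h2 := hstop ψ μ hψ hμ
    rw [hrr, Measure.restrict_add_restrict_compl (hZm ψ)] at h2
    rw [← h2]
    exact h
end

section
/- Let X be a measurable space, N the set of σ-finite measures on X, and Z₁, Z₂, ... : N → (measurable subsets of X) stopping sets (i.e. each Z_n satisfies Z_n(μ) = Z_n(μ_{Z_n(μ)} + ψ_{Z_n(μ)^c}) for all μ, ψ) such that Z_n(μ) ⊆ Z_{n+1}(μ) for all n and μ. Then Z defined by Z(μ) := ⋃_n Z_n(μ) is again a stopping set: Z(μ) = Z(μ_{Z(μ)} + ψ_{Z(μ)^c}) for all μ, ψ with ψ(Z(μ)) = 0. -/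
open MeasureTheory

/-- Theorem A.4 (deterministic part): an increasing union of stopping sets is
again a stopping set, in the sense that `Z(μ) = Z(μ_{Z(μ)} + ψ_{Z(μ)^c})` for
all `ψ` with `ψ(Z(μ)) = 0`, where `Z(μ) = ⋃_n Z_n(μ)`. -/
theorem stmt_12 {X : Type*} [MeasurableSpace X]
    (Z : ℕ → Measure X → Set X)
    (hZm : ∀ (n : ℕ) (μ : Measure X), MeasurableSet (Z n μ))
    (hstop : ∀ (n : ℕ) (μ ψ : Measure X), SigmaFinite μ → SigmaFinite ψ →
      Z n μ = Z n (μ.restrict (Z n μ) + ψ.restrict (Z n μ)ᶜ))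
    (hmono : ∀ (n : ℕ) (μ : Measure X), Z n μ ⊆ Z (n + 1) μ) :
    ∀ μ ψ : Measure X, SigmaFinite μ → SigmaFinite ψ →
      ψ (⋃ n, Z n μ) = 0 →
      (⋃ n, Z n μ) =
        ⋃ n, Z n (μ.restrict (⋃ m, Z m μ) + ψ.restrict (⋃ m, Z m μ)ᶜ) := by
  intro μ ψ hμ hψ _
  set U := ⋃ m, Z m μ with hU
  set ν := μ.restrict U + ψ.restrict Uᶜ with hν
  have hνsf : SigmaFinite ν := by
    have h1 : SigmaFinite (μ.restrict U) := Restrict.sigmaFinite μ U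
    have h2 : SigmaFinite (ψ.restrict Uᶜ) := Restrict.sigmaFinite ψ Uᶜ
    infer_instance
  have key : ∀ n, Z n μ = Z n ν := by
    intro n
    have hsub : Z n μ ⊆ U := Set.subset_iUnion (fun m => Z m μ) n
    have hdisj : Z n μ ∩ Uᶜ = ∅ := by
      rw [← Set.disjoint_iff_inter_eq_empty]
      exact disjoint_compl_right.mono_left hsub
    have h1 : ν.restrict (Z n μ) = μ.restrict (Z n μ) := by
      rw [hν, Measure.restrict_add, Measure.restrict_restrict (hZm n μ),
        Measure.restrict_restrict (hZm n μ), Set.inter_eq_left.mpr hsub, hdisj,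
        Measure.restrict_empty, add_zero]
    have h2 : ν = μ.restrict (Z n μ) + ν.restrict (Z n μ)ᶜ := by
      rw [← h1, Measure.restrict_add_restrict_compl (hZm n μ)]
    calc Z n μ = Z n (μ.restrict (Z n μ) + ν.restrict (Z n μ)ᶜ) :=
          hstop n μ ν hμ hνsf
      _ = Z n ν := by rw [← h2]
  exact Set.iUnion_congr fun n => key n
end
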